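/- arXiv:2205.13260 — 3 statements merged into one kernel-verified Lean document; each statement's English description precedes it below -/
import Mathlib

section
/- Let r ≥ 1 and let p₀, ..., p_r be the r+1 coordinate points of P^r over an algebraically closed field K of characteristic zero. There is no nonzero homogeneous polynomial F of degree r+2 in K[x₀, ..., x_r] having multiplicity at least r+1 at each of the points p₀, ..., p_r (i.e., all partial derivatives of F of order ≤ r vanish at each p_i). -/
open MvPolynomial

section Aux

variable {K : Type*} [CommRing K] {n : ℕ}

lemma pderiv_pow_monomial (j : Fin n) (m : ℕ) (b : Fin n →₀ ℕ) (c : K) :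
    (((pderiv j).toLinearMap ^ m : Module.End K (MvPolynomial (Fin n) K)))
      (monomial b c)
    = monomial (b - Finsupp.single j m) (c * ((b j).descFactorial m : ℕ)) := by
  induction m generalizing b c with
  | zero => simp
  | succ m ih =>
    rw [pow_succ, Module.End.mul_apply, Derivation.coeFn_coe, pderiv_monomial, ih]
    have hexp : b - Finsupp.single j 1 - Finsupp.single j m
        = b - Finsupp.single j (m + 1) := by
      ext k
      simp only [Finsupp.tsub_apply, Finsupp.single_apply]
      split_ifs <;> omega
    have h1 : ((b - Finsupp.single j 1 : Fin n →₀ ℕ)) j = b j - 1 := by simp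
    rw [hexp, h1, mul_assoc]
    congr 1
    cases hb : b j with
    | zero => simp
    | succ k =>
      push_cast [Nat.succ_descFactorial_succ]
      ring

lemma prod_pderiv_monomial (l : List (Fin n)) (hl : l.Nodup) (D : Fin n → ℕ)
    (b : Fin n →₀ ℕ) (c : K) :
    ((l.map fun j => ((pderiv j).toLinearMap ^ (D j) :
        Module.End K (MvPolynomial (Fin n) K))).prod) (monomial b c)
    = monomial (b - (l.map fun j => Finsupp.single j (D j)).sum)
        (c * (((l.map fun j => (b j).descFactorial (D j)).prod : ℕ) : K)) := by
  induction l with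
  | nil => simp
  | cons j tl ih =>
    have hj : j ∉ tl := (List.nodup_cons.mp hl).1
    have htl : tl.Nodup := (List.nodup_cons.mp hl).2
    set S : Fin n →₀ ℕ := (tl.map fun j => Finsupp.single j (D j)).sum with hS
    have hSj : S j = 0 := by
      rw [hS]
      have : ((tl.map fun k => Finsupp.single k (D k)).sum) j
          = Finsupp.applyAddHom (M := ℕ) j (tl.map fun k => Finsupp.single k (D k)).sum := rfl
      rw [this, map_list_sum]
      simp only [List.map_map]
      apply List.sum_eq_zero
      intro x hx
      simp only [List.mem_map] at hx
      obtain ⟨k, hk, rfl⟩ := hx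
      have : k ≠ j := fun h => hj (h ▸ hk)
      simp [Finsupp.single_apply, this]
    rw [List.map_cons, List.prod_cons, Module.End.mul_apply, ih htl,
      pderiv_pow_monomial]
    have hbSj : ((b - S : Fin n →₀ ℕ)) j = b j := by
      simp [Finsupp.tsub_apply, hSj]
    rw [hbSj]
    have hexp : b - S - Finsupp.single j (D j)
        = b - (List.map (fun j => Finsupp.single j (D j)) (j :: tl)).sum := by
      rw [List.map_cons, List.sum_cons, tsub_tsub, add_comm]
    rw [hexp]
    congr 1
    push_cast [List.map_cons, List.prod_cons]
    ring

lemma finRange_single_sum {n : ℕ} (D : Fin n → ℕ) (k : Fin n) :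
    ((((List.finRange n).map fun j => Finsupp.single j (D j)).sum : Fin n →₀ ℕ)) k
      = D k := by
  have : ((((List.finRange n).map fun j => Finsupp.single j (D j)).sum : Fin n →₀ ℕ)) k
      = Finsupp.applyAddHom (M := ℕ) k
          (((List.finRange n).map fun j => Finsupp.single j (D j)).sum) := rfl
  rw [this, map_list_sum]
  simp only [List.map_map]
  have : ((List.finRange n).map fun j =>
      (Finsupp.applyAddHom (M := ℕ) k) (Finsupp.single j (D j))).sum
      = ∑ j : Fin n, (Finsupp.single j (D j) : Fin n →₀ ℕ) k := by
    rw [Fin.sum_univ_def]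
    rfl
  rw [show (⇑(Finsupp.applyAddHom (M := ℕ) k) ∘ fun j => Finsupp.single j (D j))
      = fun j => (Finsupp.applyAddHom (M := ℕ) k) (Finsupp.single j (D j)) from rfl, this]
  simp [Finsupp.single_apply]

end Aux

/-- Lemma 1.3 of the paper: there is no nonzero form `F` of degree `r+2` in `r+1` variables
(i.e. on `P^r`) having multiplicity at least `r+1` at each of the `r+1` coordinate points,
where multiplicity `≥ r+1` at `p` means all partial derivatives of order `≤ r` vanish at `p`
(here the differential operator `∂^D = ∏_j (∂/∂x_j)^{D j}` is the composition of the
partial derivatives prescribed by the multi-index `D`). -/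
theorem stmt_6 (K : Type*) [Field K] [IsAlgClosed K] [CharZero K] (r : ℕ) (hr : 1 ≤ r)
    (F : MvPolynomial (Fin (r + 1)) K) (hF : F ≠ 0) (hhom : F.IsHomogeneous (r + 2)) :
    ¬ (∀ i : Fin (r + 1), ∀ D : Fin (r + 1) → ℕ, (∑ j, D j) ≤ r →
        MvPolynomial.eval (Pi.single i 1)
          ((((List.finRange (r + 1)).map fun j =>
              ((MvPolynomial.pderiv j).toLinearMap ^ (D j) :
                Module.End K (MvPolynomial (Fin (r + 1)) K))).prod)
            F) = 0) := by
  intro H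
  obtain ⟨a, ha⟩ : F.support.Nonempty :=
    Finset.nonempty_of_ne_empty (fun h => hF (support_eq_empty.mp h))
  have hca : coeff a F ≠ 0 := mem_support_iff.mp ha
  -- every monomial in the support has total degree r+2
  have hdeg : ∀ d ∈ F.support, ∑ j, d j = r + 2 := by
    intro d hd
    have hdd : Finsupp.degree d = r + 2 := by
      by_contra hne
      exact (mem_support_iff.mp hd) (hhom.coeff_eq_zero hne)
    rw [← hdd, Finsupp.degree]
    exact (Finset.sum_subset (Finset.subset_univ _)
      (fun x _ hx => Finsupp.notMem_support_iff.mp hx)).symm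
  -- pigeonhole: some exponent is at least 2
  obtain ⟨i, hi⟩ : ∃ i, 2 ≤ a i := by
    by_contra h
    push_neg at h
    have h1 : ∑ j, a j ≤ ∑ _j : Fin (r + 1), 1 :=
      Finset.sum_le_sum (fun j _ => by have := h j; omega)
    have h2 := hdeg a ha
    simp only [Finset.sum_const, Finset.card_univ, Fintype.card_fin, smul_eq_mul,
      mul_one] at h1
    omega
  set D : Fin (r + 1) → ℕ := Function.update a i (a i - 2) with hD
  have hDk : ∀ k, k ≠ i → D k = a k := fun k hk => Function.update_of_ne hk _ _
  have hDi : D i = a i - 2 := Function.update_self _ _ _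
  have hsplit : ∀ c : Fin (r + 1) → ℕ,
      ∑ j, c j = c i + ∑ j ∈ Finset.univ.erase i, c j :=
    fun c => (Finset.add_sum_erase _ c (Finset.mem_univ i)).symm
  have herase : ∑ j ∈ Finset.univ.erase i, D j = ∑ j ∈ Finset.univ.erase i, a j :=
    Finset.sum_congr rfl (fun k hk => hDk k (Finset.ne_of_mem_erase hk))
  have hsum : ∑ j, D j ≤ r := by
    have h1 := hsplit D
    have h2 := hsplit a
    have h3 := hdeg a ha
    omega
  have HH := H i D hsum
  -- notation
  set S : Fin (r + 1) →₀ ℕ := ((List.finRange (r + 1)).map fun j =>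
      Finsupp.single j (D j)).sum with hS
  have hSk : ∀ k, S k = D k := fun k => finRange_single_sum D k
  -- expand F as a sum of monomials
  rw [← support_sum_monomial_coeff F, map_sum, map_sum] at HH
  have hterm : ∀ b ∈ F.support,
      eval (Pi.single i (1 : K))
        ((((List.finRange (r + 1)).map fun j =>
            ((pderiv j).toLinearMap ^ (D j) :
              Module.End K (MvPolynomial (Fin (r + 1)) K))).prod)
          (monomial b (coeff b F)))
      = coeff b F * (((List.finRange (r + 1)).map fun j =>
            (b j).descFactorial (D j)).prod : ℕ)
        * (b - S).prod fun k e => ((Pi.single i (1 : K) : Fin (r + 1) → K) k) ^ e := by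
    intro b _
    rw [prod_pderiv_monomial _ (List.nodup_finRange _), eval_monomial, ← hS]
  -- terms with b ≠ a vanish
  have hzero : ∀ b ∈ F.support, b ≠ a →
      coeff b F * (((List.finRange (r + 1)).map fun j =>
            (b j).descFactorial (D j)).prod : ℕ)
        * (b - S).prod (fun k e => ((Pi.single i (1 : K) : Fin (r + 1) → K) k) ^ e) = 0 := by
    intro b hb hba
    obtain ⟨k, hki, hbk⟩ : ∃ k, k ≠ i ∧ b k ≠ a k := by
      by_contra h
      push_neg at h
      apply hba
      have h1 := hsplit (b : Fin (r + 1) → ℕ)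
      have h2 := hsplit (a : Fin (r + 1) → ℕ)
      have herase2 : ∑ j ∈ Finset.univ.erase i, b j
          = ∑ j ∈ Finset.univ.erase i, a j :=
        Finset.sum_congr rfl (fun k hk => h k (Finset.ne_of_mem_erase hk))
      have h3 := hdeg b hb
      have h4 := hdeg a ha
      have hbi : b i = a i := by omega
      ext k
      by_cases hk : k = i
      · rw [hk]; exact hbi
      · exact h k hk
    rcases lt_or_gt_of_ne hbk with hlt | hgt
    · -- b k < a k : descFactorial factor is zero
      have hfz : (b k).descFactorial (D k) = 0 := by
        rw [hDk k hki]
        exact Nat.descFactorial_eq_zero_iff_lt.mpr hlt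
      have hNN : (((List.finRange (r + 1)).map fun j =>
          (b j).descFactorial (D j)).prod : ℕ) = 0 := by
        rw [← Fin.prod_univ_def]
        exact Finset.prod_eq_zero (Finset.mem_univ k) hfz
      rw [hNN]
      simp
    · -- b k > a k : evaluation factor is zero
      have hbs : (b - S) k = b k - D k := by
        simp [Finsupp.tsub_apply, hSk]
      have hpos : 0 < (b - S) k := by
        rw [hbs, hDk k hki]; omega
      have hmem : k ∈ (b - S).support := Finsupp.mem_support_iff.mpr (by omega)
      have : ((b - S).prod fun k e => ((Pi.single i (1 : K) : Fin (r + 1) → K) k) ^ e) = 0 := by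
        apply Finset.prod_eq_zero hmem
        show (Pi.single i (1 : K) : Fin (r + 1) → K) k ^ ((b - S) k) = 0
        rw [Pi.single_eq_of_ne hki, zero_pow (by omega)]
      rw [this, mul_zero]
  -- the term at a
  have hasub : a - S = Finsupp.single i 2 := by
    ext k
    simp only [Finsupp.tsub_apply, Finsupp.single_apply]
    rw [hSk]
    by_cases hk : k = i
    · subst hk; simp [hDi]; omega
    · rw [hDk k hk]
      simp [Ne.symm hk]
  have haprod : ((a - S).prod fun k e => ((Pi.single i (1 : K) : Fin (r + 1) → K) k) ^ e) = 1 := by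
    rw [hasub, Finsupp.prod_single_index (by simp)]
    simp
  have haNN : (((List.finRange (r + 1)).map fun j =>
      (a j).descFactorial (D j)).prod : ℕ) ≠ 0 := by
    rw [← Fin.prod_univ_def]
    rw [Finset.prod_ne_zero_iff]
    intro k _
    intro h0
    have := Nat.descFactorial_eq_zero_iff_lt.mp h0
    by_cases hk : k = i
    · subst hk; omega
    · rw [hDk k hk] at this; omega
  rw [Finset.sum_eq_single_of_mem a ha
      (fun b hb hba => by rw [hterm b hb]; exact hzero b hb hba)] at HH
  rw [hterm a ha, haprod, mul_one] at HH
  exact (mul_ne_zero hca (Nat.cast_ne_zero.mpr haNN)) HH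
end

section
/- Let d ≥ 2, r ≥ 0, k ≥ 0, m̄ ≥ 1, μ ≥ 0 be integers and suppose that (k+1)(n-k) + 1 > C(d+k, k) · d^r, where n is an integer with n > k. Then for all sufficiently large integers m (with m > m̄), the following inequality holds: [(k+1)(n-k)+1]·[C(m+r+1, r+1) - C(m-m̄+r+1, r+1)] + C(d+k, k)·C(dm - m̄ + μ + r + 1, r+1) > C(d+k, k)·C(dm + μ + r + 1, r+1). -/
/-!
Both differences of binomial coefficients are controlled by the increments
`C(N+1, r+1) - C(N, r+1) = C(N, r)`: the left one is at least `mbar · C(m - mbar + r + 1, r)`,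
the right one at most `mbar · C(dm + μ + r + 1, r)`. It therefore suffices that
`C(d+k,k) · C(ds + c + r, r) < [(k+1)(n-k)+1] · C(s + r, r)` for large `s`, which holds because
the ratio `C(ds + c + r, r) / C(s + r, r)` tends to `d^r`.
-/

open Finset Filter Topology Nat

lemma cast_add_choose_mul_factorial (n r : ℕ) :
    ((n + r).choose r * r ! : ℝ) = ∏ i ∈ range r, ((n + 1 + i : ℕ) : ℝ) := by
  rw [← Nat.cast_prod, ← Nat.ascFactorial_eq_prod_range, Nat.ascFactorial_eq_factorial_mul_choose]
  push_cast; ring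

lemma tendsto_choose_div_choose (d c r : ℕ) :
    Tendsto (fun s : ℕ ↦ ((d * s + c + r).choose r : ℝ) / (s + r).choose r) atTop
      (𝓝 ((d : ℝ) ^ r)) := by
  have hratio (s : ℕ) : ((d * s + c + r).choose r : ℝ) / (s + r).choose r
      = ∏ i ∈ range r, (((c + 1 + i : ℕ) : ℝ) + d * s) / (((1 + i : ℕ) : ℝ) + 1 * s) := by
    rw [← mul_div_mul_right _ _ (Nat.cast_ne_zero.2 r.factorial_ne_zero),
      cast_add_choose_mul_factorial, cast_add_choose_mul_factorial, ← prod_div_distrib]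
    refine prod_congr rfl fun i _ ↦ ?_
    push_cast; ring_nf
  simp_rw [hratio]
  have hpow : (d : ℝ) ^ r = ∏ _i ∈ range r, (d : ℝ) / 1 := by simp
  rw [hpow]
  exact tendsto_finsetProd _ fun i _ ↦ tendsto_add_mul_div_add_mul_atTop_nhds _ _ _ one_ne_zero

lemma eventually_mul_choose_lt {A B d : ℕ} (c r : ℕ) (h : B * d ^ r < A) :
    ∀ᶠ s in atTop, B * (d * s + c + r).choose r < A * (s + r).choose r := by
  have hlim := (tendsto_choose_div_choose d c r).const_mul (B : ℝ)
  filter_upwards [hlim.eventually_lt_const (u := (A : ℝ)) (by exact_mod_cast h)] with s hs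
  have hpos : (0 : ℝ) < (s + r).choose r := by exact_mod_cast Nat.choose_pos (by omega)
  rw [← mul_div_assoc, div_lt_iff₀ hpos] at hs
  exact_mod_cast hs

lemma choose_add_mul_choose_le (n g r : ℕ) :
    n.choose (r + 1) + g * n.choose r ≤ (n + g).choose (r + 1) := by
  induction g with
  | zero => simp
  | succ g ih =>
    have hmono : n.choose r ≤ (n + g).choose r := Nat.choose_le_choose r (by omega)
    rw [← add_assoc, choose_succ_succ', add_one_mul]
    omega

lemma choose_le_choose_add_mul_choose (n g r : ℕ) :
    (n + g).choose (r + 1) ≤ n.choose (r + 1) + g * (n + g).choose r := by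
  induction g with
  | zero => simp
  | succ g ih =>
    have hmono : (n + g).choose r ≤ (n + g + 1).choose r := Nat.choose_le_choose r (by omega)
    have hmul := Nat.mul_le_mul_left g hmono
    rw [← add_assoc, choose_succ_succ', add_one_mul]
    omega

theorem stmt_7_general (d r k mbar μ n : ℕ) (hd : 2 ≤ d) (hmbar : 1 ≤ mbar)
    (h : (d + k).choose k * d ^ r < (k + 1) * (n - k) + 1) :
    ∃ M : ℕ, ∀ m : ℕ, M ≤ m → mbar < m →
      ((k + 1) * (n - k) + 1) *
          ((m + r + 1).choose (r + 1) - (m - mbar + r + 1).choose (r + 1)) +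
        (d + k).choose k * (d * m - mbar + μ + r + 1).choose (r + 1) >
      (d + k).choose k * (d * m + μ + r + 1).choose (r + 1) := by
  obtain ⟨g, rfl⟩ : ∃ g, mbar = g + 1 := ⟨mbar - 1, by omega⟩
  set A := (k + 1) * (n - k) + 1
  set B := (d + k).choose k
  obtain ⟨S, hS⟩ := eventually_atTop.1 (eventually_mul_choose_lt (d * g + μ + 1) r h)
  refine ⟨S + g, fun m hSm hgm ↦ ?_⟩
  obtain ⟨x, rfl⟩ : ∃ x, m = x + (g + 1) := ⟨m - (g + 1), by omega⟩
  have hdm : g + 1 ≤ d * (x + (g + 1)) := by nlinarith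
  have hcore : B * (d * (x + (g + 1)) + μ + r + 1).choose r < A * (x + r + 1).choose r := by
    convert hS (x + 1) (by omega) using 3 <;> ring
  have hlow := choose_add_mul_choose_le (x + r + 1) (g + 1) r
  have hup := choose_le_choose_add_mul_choose (d * (x + (g + 1)) - (g + 1) + μ + r + 1) (g + 1) r
  rw [show x + r + 1 + (g + 1) = x + (g + 1) + r + 1 by ring] at hlow
  rw [show d * (x + (g + 1)) - (g + 1) + μ + r + 1 + (g + 1) = d * (x + (g + 1)) + μ + r + 1 by
    omega] at hup
  rw [Nat.add_sub_cancel]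
  calc B * (d * (x + (g + 1)) + μ + r + 1).choose (r + 1)
      ≤ B * (d * (x + (g + 1)) - (g + 1) + μ + r + 1).choose (r + 1)
          + (g + 1) * (B * (d * (x + (g + 1)) + μ + r + 1).choose r) :=
        (Nat.mul_le_mul_left B hup).trans_eq (by ring)
    _ < B * (d * (x + (g + 1)) - (g + 1) + μ + r + 1).choose (r + 1)
          + (g + 1) * (A * (x + r + 1).choose r) := by gcongr
    _ ≤ _ := by
        rw [add_comm, mul_left_comm]
        gcongr
        omega

/-- The asymptotic numerical estimate in the proof of the Section Lemma: under
`(k+1)(n−k) + 1 > C(d+k,k)·d^r`, for all sufficiently large `m` (with `m > mbar`) one has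
`[(k+1)(n−k)+1]·[C(m+r+1,r+1) − C(m−mbar+r+1,r+1)] + C(d+k,k)·C(dm−mbar+μ+r+1,r+1)
  > C(d+k,k)·C(dm+μ+r+1,r+1)`. -/
theorem stmt_7 (d r k mbar μ n : ℕ) (hd : 2 ≤ d) (hmbar : 1 ≤ mbar) (hn : k < n)
    (h : (d + k).choose k * d ^ r < (k + 1) * (n - k) + 1) :
    ∃ M : ℕ, ∀ m : ℕ, M ≤ m → mbar < m →
      ((k + 1) * (n - k) + 1) *
          ((m + r + 1).choose (r + 1) - (m - mbar + r + 1).choose (r + 1)) +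
        (d + k).choose k * (d * m - mbar + μ + r + 1).choose (r + 1) >
      (d + k).choose k * (d * m + μ + r + 1).choose (r + 1) :=
  stmt_7_general d r k mbar μ n hd hmbar h
end

section
/- Let K ⊆ L ⊆ M be field extensions with L/K and M/L finitely generated. If L/K is unirational (i.e., L embeds K-linearly into a purely transcendental extension of K) and M/L is unirational (i.e., M embeds L-linearly into a purely transcendental extension of L), then M is unirational over K: M embeds K-linearly into a purely transcendental extension of K. -/
open MvPolynomial


/-- Roth's criterion, field-theoretic form: in a tower `K ⊆ L ⊆ M` of finitely generated
field extensions, if `L/K` is unirational (i.e. `L` embeds over `K` into a purely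
transcendental extension `K(x₁,…,x_a)`) and `M/L` is unirational over `L`, then `M/K` is
unirational: `M` embeds `K`-linearly into a purely transcendental extension of `K`. -/
theorem stmt_13 (K L M : Type*) [Field K] [Field L] [Field M]
    [Algebra K L] [Algebra L M] [Algebra K M] [IsScalarTower K L M]
    (hLfg : ∃ s : Finset L, IntermediateField.adjoin K (s : Set L) = ⊤)
    (hMfg : ∃ s : Finset M, IntermediateField.adjoin L (s : Set M) = ⊤)
    (hLuni : ∃ (a : ℕ) (f : L →ₐ[K] FractionRing (MvPolynomial (Fin a) K)),
      Function.Injective f)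
    (hMuni : ∃ (b : ℕ) (g : M →ₐ[L] FractionRing (MvPolynomial (Fin b) L)),
      Function.Injective g) :
    ∃ (c : ℕ) (h : M →ₐ[K] FractionRing (MvPolynomial (Fin c) K)),
      Function.Injective h := by
  classical
  obtain ⟨a, f, hf⟩ := hLuni
  obtain ⟨b, g, hg⟩ := hMuni
  -- notation
  set A := MvPolynomial (Fin a) K with hA
  set F := FractionRing A with hF
  set B := MvPolynomial (Fin b) A with hB
  set Pb := MvPolynomial (Fin b) F with hPb
  set T := FractionRing (MvPolynomial (Fin (b + a)) K) with hT
  letI : Algebra B Pb := MvPolynomial.algebraMvPolynomial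
  -- the variable-shuffling K-algebra isomorphism
  let e : B ≃ₐ[K] MvPolynomial (Fin (b + a)) K :=
    (MvPolynomial.sumAlgEquiv K (Fin b) (Fin a)).symm.trans
      (MvPolynomial.renameEquiv K finSumFinEquiv)
  let ψ : B →+* T := (algebraMap (MvPolynomial (Fin (b + a)) K) T).comp e.toRingHom
  have hψ : Function.Injective ψ :=
    (IsFractionRing.injective (MvPolynomial (Fin (b + a)) K) T).comp e.injective
  -- `Pb` is a localization of `B`
  set S : Submonoid B := (nonZeroDivisors A).map (C : A →+* B) with hS
  haveI : IsLocalization S Pb := MvPolynomial.isLocalization _ _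
  have hunit : ∀ s : S, IsUnit (ψ s) := by
    rintro ⟨-, x, hx, rfl⟩
    have hx0 : (C x : B) ≠ 0 := by
      simpa using mem_nonZeroDivisors_iff_ne_zero.mp hx
    exact isUnit_iff_ne_zero.mpr fun h0 => hx0 (hψ (by simpa using h0))
  let Φ : Pb →+* T := IsLocalization.lift (M := S) hunit
  have hΦalg : ∀ x : B, Φ (algebraMap B Pb x) = ψ x := fun x => IsLocalization.lift_eq hunit x
  have halgBP : Function.Injective (algebraMap B Pb) := by
    have : (algebraMap B Pb) = MvPolynomial.map (algebraMap A F) := rfl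
    rw [this]
    exact MvPolynomial.map_injective _ (IsFractionRing.injective A F)
  have hΦ : Function.Injective Φ := by
    rw [IsLocalization.lift_injective_iff]
    intro x y
    constructor
    · intro h; rw [halgBP h]
    · intro h; rw [hψ h]
  -- from `L`-polynomials to `Pb`
  let ρ : MvPolynomial (Fin b) L →+* Pb := MvPolynomial.map (f : L →+* F)
  have hρ : Function.Injective ρ := MvPolynomial.map_injective _ hf
  let χ : MvPolynomial (Fin b) L →+* T := Φ.comp ρ
  have hχ : Function.Injective χ := hΦ.comp hρ
  let θ : FractionRing (MvPolynomial (Fin b) L) →+* T := IsFractionRing.lift hχ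
  let h0 : M →+* T := θ.comp (g : M →+* FractionRing (MvPolynomial (Fin b) L))
  have hcomm : ∀ k : K, h0 (algebraMap K M k) = algebraMap K T k := by
    intro k
    have h1 : algebraMap K M k = algebraMap L M (algebraMap K L k) :=
      (IsScalarTower.algebraMap_apply K L M k)
    have h2 : g (algebraMap L M (algebraMap K L k)) =
        algebraMap L (FractionRing (MvPolynomial (Fin b) L)) (algebraMap K L k) :=
      g.commutes _
    have h3 : algebraMap L (FractionRing (MvPolynomial (Fin b) L)) (algebraMap K L k) =
        algebraMap (MvPolynomial (Fin b) L) (FractionRing (MvPolynomial (Fin b) L))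
          (C (algebraMap K L k)) := by
      rw [IsScalarTower.algebraMap_apply L (MvPolynomial (Fin b) L)
        (FractionRing (MvPolynomial (Fin b) L))]
      rfl
    have h4 : θ (algebraMap (MvPolynomial (Fin b) L) (FractionRing (MvPolynomial (Fin b) L))
        (C (algebraMap K L k))) = χ (C (algebraMap K L k)) :=
      IsFractionRing.lift_algebraMap hχ _
    have h5 : ρ (C (algebraMap K L k)) = algebraMap B Pb (C (C k)) := by
      show MvPolynomial.map (f : L →+* F) (C (algebraMap K L k)) =
        MvPolynomial.map (algebraMap A F) (C (C k))
      rw [MvPolynomial.map_C, MvPolynomial.map_C]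
      congr 1
      show f (algebraMap K L k) = algebraMap A F (C k)
      rw [f.commutes, IsScalarTower.algebraMap_apply K A F, MvPolynomial.algebraMap_eq]
    have h6 : ψ (C (C k)) = algebraMap K T k := by
      show (algebraMap (MvPolynomial (Fin (b + a)) K) T) (e (C (C k))) = algebraMap K T k
      have : (C (C k) : B) = algebraMap K B k := by
        rw [IsScalarTower.algebraMap_apply K A B]; rfl
      rw [this, e.commutes, ← IsScalarTower.algebraMap_apply]
    calc h0 (algebraMap K M k) = θ (g (algebraMap L M (algebraMap K L k))) := by rw [← h1]; rfl
    _ = χ (C (algebraMap K L k)) := by rw [h2, h3, h4]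
    _ = Φ (algebraMap B Pb (C (C k))) := by show Φ (ρ _) = _; rw [h5]
    _ = algebraMap K T k := by rw [hΦalg, h6]
  refine ⟨b + a, ⟨h0, hcomm⟩, ?_⟩
  exact h0.injective
end
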